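/- arXiv:1006.4696 — 2 statements merged into one kernel-verified Lean document; each statement's English description precedes it below -/
import Mathlib

section
/- In a unit-demand market, the pointwise maximum of prices max(p^j, p'^j) of two competitive equilibria, together with the pointwise minimum of payoffs min(u_i, u'_i), forms a competitive equilibrium. Consequently, the set of competitive equilibria, partially ordered by componentwise comparison of price vectors, forms a lattice. -/
attribute [local instance] Classical.propDecidable

/-- A unit-demand market: finite sets of buyers `I` and goods `J`, with utility
functions `u i j : ℝ → ℝ` that are continuous, strictly decreasing, surjective
(domain and range cover all of `ℝ`), and eventually non-positive. -/
structure Market (I J : Type) [Fintype I] [Fintype J] where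
  u : I → J → ℝ → ℝ
  cont : ∀ i j, Continuous (u i j)
  anti : ∀ i j, StrictAnti (u i j)
  surj : ∀ i j, Function.Surjective (u i j)
  evNonpos : ∀ i j, ∃ x : ℝ, ∀ y ≥ x, u i j y ≤ 0

/-- A competitive equilibrium: nonnegative prices `p`, nonnegative payoffs `w`,
and a partial matching `μ` (injective on matched buyers) such that every buyer
receives a most preferred good at the prices, unmatched buyers have payoff `0`,
and unmatched goods have price `0`. -/
def IsEquilib {I J : Type} [Fintype I] [Fintype J] (M : Market I J)
    (p : J → ℝ) (w : I → ℝ) (μ : I → Option J) : Prop :=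
  (∀ i i' j, μ i = some j → μ i' = some j → i = i') ∧
  (∀ j, 0 ≤ p j) ∧ (∀ i, 0 ≤ w i) ∧
  (∀ i j, μ i = some j → w i = M.u i j (p j)) ∧
  (∀ i j, M.u i j (p j) ≤ w i) ∧
  (∀ i, μ i = none → w i = 0) ∧
  (∀ j, (∀ i, μ i ≠ some j) → p j = 0)

/-- `W` is the lowest competitive equilibrium: its prices are componentwise
below those of every competitive equilibrium. -/
def IsLowest {I J : Type} [Fintype I] [Fintype J] (M : Market I J)
    (p : J → ℝ) (w : I → ℝ) (μ : I → Option J) : Prop :=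
  IsEquilib M p w μ ∧ ∀ p' w' μ', IsEquilib M p' w' μ' → ∀ j, p j ≤ p' j

/-- `W` is the highest competitive equilibrium: its prices are componentwise
above those of every competitive equilibrium. -/
def IsHighest {I J : Type} [Fintype I] [Fintype J] (M : Market I J)
    (p : J → ℝ) (w : I → ℝ) (μ : I → Option J) : Prop :=
  IsEquilib M p w μ ∧ ∀ p' w' μ', IsEquilib M p' w' μ' → ∀ j, p' j ≤ p j

/-- Induced payoff `u_i(p) = max({u_i^j(p^j) : j} ∪ {0})`. -/
noncomputable def inducedPayoff {I J : Type} [Fintype I] [Fintype J] (M : Market I J)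
    (p : J → ℝ) (i : I) : ℝ :=
  (insert (0:ℝ) (Finset.univ.image fun j => M.u i j (p j))).max' (Finset.insert_nonempty _ _)

/-- Induced price `p^j(u) = max({p_i^j(u_i) : i} ∪ {0})`, where `p_i^j` is the
inverse of `u_i^j`. -/
noncomputable def inducedPrice {I J : Type} [Fintype I] [Fintype J] (M : Market I J)
    (w : I → ℝ) (j : J) : ℝ :=
  (insert (0:ℝ) (Finset.univ.image fun i => Function.invFun (M.u i j) (w i))).max' (Finset.insert_nonempty _ _)

/-!
Let `T` be the buyers strictly better off in the second equilibrium and `S` the goods strictly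
cheaper there. A buyer of `T` is matched in the second equilibrium, to a good of `S`; a good of `S`
is sold in the first equilibrium, to a buyer of `T`. Counting gives `#T = #S`, so both matchings
pair `T` with `S`, and gluing the first equilibrium on `T ∪ S` to the second one elsewhere gives
the maximal prices with the minimal payoffs; gluing the other way round gives the meet.
-/

open Finset

theorem Finset.mapsTo_of_surjOn_of_card_le {α β : Type*} {s : Finset α} {t : Finset β}
    {f : α → β} (hf : Set.SurjOn f s t) (hst : #s ≤ #t) : Set.MapsTo f s t := by
  classical
  have hcover : Set.SurjOn f (s.filter (f · ∈ t)) t := by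
    intro b hb
    obtain ⟨a, ha, rfl⟩ := hf hb
    exact ⟨a, mem_filter.2 ⟨ha, hb⟩, rfl⟩
  have hs : s.filter (f · ∈ t) = s :=
    eq_of_subset_of_card_le (filter_subset _ _) (hst.trans (card_le_card_of_surjOn f hcover))
  intro a ha
  rw [mem_coe, ← hs] at ha
  exact (mem_filter.1 ha).2

namespace IsEquilib

variable {I J : Type} [Fintype I] [Fintype J] {M : Market I J}
  {p p' : J → ℝ} {w w' : I → ℝ} {μ μ' : I → Option J}

theorem price_lt_of_payoff_lt (h : IsEquilib M p w μ) (h' : IsEquilib M p' w' μ') {i : I}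
    {j : J} (hij : μ' i = some j) (hw : w i < w' i) : p' j < p j := by
  obtain ⟨-, -, -, -, best, -, -⟩ := h
  obtain ⟨-, -, -, meq', -, -, -⟩ := h'
  exact (M.anti i j).lt_iff_gt.mp (by linarith [best i j, meq' i j hij])

theorem payoff_lt_of_price_lt (h : IsEquilib M p w μ) (h' : IsEquilib M p' w' μ') {i : I}
    {j : J} (hij : μ i = some j) (hp : p' j < p j) : w i < w' i := by
  obtain ⟨-, -, -, meq, -, -, -⟩ := h
  obtain ⟨-, -, -, -, best', -, -⟩ := h'
  linarith [M.anti i j hp, meq i j hij, best' i j]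

theorem exists_matched_of_payoff_lt (h : IsEquilib M p w μ) (h' : IsEquilib M p' w' μ')
    {i : I} (hw : w i < w' i) : ∃ j, μ' i = some j ∧ p' j < p j := by
  have ⟨_, _, wnn, _⟩ := h
  have ⟨_, _, _, _, _, bun', _⟩ := h'
  obtain ⟨j, hj⟩ := Option.ne_none_iff_exists'.mp fun hnone =>
    hw.not_ge (by rw [bun' i hnone]; exact wnn i)
  exact ⟨j, hj, h.price_lt_of_payoff_lt h' hj hw⟩

theorem exists_matched_of_price_lt (h : IsEquilib M p w μ) (h' : IsEquilib M p' w' μ')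
    {j : J} (hp : p' j < p j) : ∃ i, μ i = some j ∧ w i < w' i := by
  have ⟨_, _, _, _, _, _, gun⟩ := h
  have ⟨_, pnn', _⟩ := h'
  by_contra! hne
  have hpj : p j = 0 := gun j fun i hi => (hne i hi).not_gt (h.payoff_lt_of_price_lt h' hi hp)
  linarith [pnn' j]

theorem payoff_lt_iff_price_lt (h : IsEquilib M p w μ) (h' : IsEquilib M p' w' μ') {i : I}
    {j : J} (hij : μ i = some j ∨ μ' i = some j) : w i < w' i ↔ p' j < p j := by
  set T : Finset I := {i | w i < w' i}
  set S : Finset (Option J) := {x | ∃ j ∈ x, p' j < p j}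
  have memT i : i ∈ T ↔ w i < w' i := by simp [T]
  have memS x : x ∈ S ↔ ∃ j ∈ x, p' j < p j := by simp [S]
  have hμ'T : Set.MapsTo μ' T S := fun i hi =>
    (memS _).2 (h.exists_matched_of_payoff_lt h' ((memT i).1 hi))
  have hμ'inj : Set.InjOn μ' T := by
    intro a ha b _ hab
    obtain ⟨j, hj, -⟩ := (memS _).1 (hμ'T ha)
    exact h'.1 a b j hj (hab ▸ hj)
  have hμS : Set.SurjOn μ T S := by
    intro x hx
    obtain ⟨j, rfl, hp⟩ := (memS x).1 hx
    obtain ⟨i, hi, hw⟩ := h.exists_matched_of_price_lt h' hp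
    exact ⟨i, (memT i).2 hw, hi⟩
  have hcard : #T ≤ #S := card_le_card_of_injOn μ' hμ'T hμ'inj
  have hμT : Set.MapsTo μ T S := mapsTo_of_surjOn_of_card_le hμS hcard
  have hμ'S : Set.SurjOn μ' T S :=
    surjOn_of_injOn_of_card_le μ' hμ'T hμ'inj (card_le_card_of_surjOn μ hμS)
  rcases hij with hij | hij
  · refine ⟨fun hw => ?_, h.payoff_lt_of_price_lt h' hij⟩
    obtain ⟨j', hj', hp⟩ := (memS _).1 (hμT ((memT i).2 hw))
    rwa [Option.some_injective _ (hij.symm.trans hj')]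
  · refine ⟨h.price_lt_of_payoff_lt h' hij, fun hp => ?_⟩
    obtain ⟨i', hi', hi'j⟩ := hμ'S ((memS _).2 ⟨j, rfl, hp⟩)
    rwa [← h'.1 i' i j hi'j hij, ← memT]

theorem ite (h : IsEquilib M p w μ) (h' : IsEquilib M p' w' μ')
    (T : I → Prop) [DecidablePred T] (S : J → Prop) [DecidablePred S]
    (hTS : ∀ i j, μ i = some j ∨ μ' i = some j → (T i ↔ S j))
    (hbest : ∀ i j, M.u i j (if S j then p j else p' j) ≤ if T i then w i else w' i) :
    IsEquilib M (fun j => if S j then p j else p' j) (fun i => if T i then w i else w' i)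
      (fun i => if T i then μ i else μ' i) := by
  obtain ⟨inj, pnn, wnn, meq, -, bun, gun⟩ := h
  obtain ⟨inj', pnn', wnn', meq', -, bun', gun'⟩ := h'
  refine ⟨?_, fun j => ?_, fun i => ?_, fun i j hij => ?_, hbest, fun i hi => ?_, fun j hj => ?_⟩
  · intro a b j ha hb
    by_cases hTa : T a <;> by_cases hTb : T b <;> simp only [hTa, hTb, if_true, if_false] at ha hb
    · exact inj a b j ha hb
    · exact absurd ((hTS b j (.inr hb)).mpr ((hTS a j (.inl ha)).mp hTa)) hTb
    · exact absurd ((hTS a j (.inr ha)).mpr ((hTS b j (.inl hb)).mp hTb)) hTa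
    · exact inj' a b j ha hb
  · dsimp only
    split_ifs
    exacts [pnn j, pnn' j]
  · dsimp only
    split_ifs
    exacts [wnn i, wnn' i]
  · by_cases hT : T i <;> simp only [hT, if_true, if_false] at hij ⊢
    · rw [if_pos ((hTS i j (.inl hij)).mp hT)]
      exact meq i j hij
    · rw [if_neg (mt (hTS i j (.inr hij)).mpr hT)]
      exact meq' i j hij
  · by_cases hT : T i <;> simp only [hT, if_true, if_false] at hi ⊢
    exacts [bun i hi, bun' i hi]
  · by_cases hS : S j <;> simp only [hS, if_true, if_false]
    · exact gun j fun i hi => hj i (by simpa [(hTS i j (.inl hi)).mpr hS] using hi)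
    · exact gun' j fun i hi => hj i (by simpa [mt (hTS i j (.inr hi)).mp hS] using hi)

end IsEquilib

/-- The pointwise maximum of prices and pointwise minimum of payoffs of two
competitive equilibria is again a competitive equilibrium; together with the
corresponding statement for pointwise min/max, the set of competitive
equilibria ordered componentwise by prices forms a lattice. -/
theorem lattice_sup {I J : Type} [Fintype I] [Fintype J] (M : Market I J)
    (p p' : J → ℝ) (w w' : I → ℝ) (μ μ' : I → Option J)
    (h : IsEquilib M p w μ) (h' : IsEquilib M p' w' μ') :
    IsEquilib M (fun j => max (p j) (p' j)) (fun i => min (w i) (w' i))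
      (fun i => if w i < w' i then μ i else μ' i)
    ∧
    IsEquilib M (fun j => min (p j) (p' j)) (fun i => max (w i) (w' i))
      (fun i => if w' i ≤ w i then μ i else μ' i) := by
  have key : ∀ i j, μ i = some j ∨ μ' i = some j → (w i < w' i ↔ p' j < p j) :=
    fun i j => h.payoff_lt_iff_price_lt h'
  have ⟨_, _, _, _, best, _⟩ := h
  have ⟨_, _, _, _, best', _⟩ := h'
  have hmax j : max (p j) (p' j) = if p' j < p j then p j else p' j := by
    rw [max_comm, max_def_lt]
  constructor
  · have hsup := h.ite h' (fun i => w i < w' i) (fun j => p' j < p j) key fun i j => by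
      simpa only [← hmax, ← min_def_lt, (M.anti i j).antitone.map_max] using
        min_le_min (best i j) (best' i j)
    simpa only [hmax, min_def_lt] using hsup
  · have hinf := h.ite h' (fun i => w' i ≤ w i) (fun j => p j ≤ p' j)
      (fun i j hij => by simpa only [not_lt] using (key i j hij).not) fun i j => by
        simpa only [← min_def, ← max_def', (M.anti i j).antitone.map_min] using
          max_le_max (best i j) (best' i j)
    simpa only [min_def, max_def'] using hinf
end

section
/- (Entanglement) Let W and W' be two competitive equilibria of a unit-demand market. If buyer i is matched to good j in W, then the price of j and the payoff of i are oppositely ordered across the two equilibria: p^j(W') > p^j(W) implies u_i(W') < u_i(W), and p^j(W') < p^j(W) implies u_i(W') > u_i(W), and p^j(W') = p^j(W) implies u_i(W') = u_i(W); this holds regardless of whether i and j are matched in W'. -/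
attribute [local instance] Classical.propDecidable

/-! Let `A` be the buyers whose payoff drops from `W₁` to `W₂` and `T` the goods whose price rises.
A buyer of `A` is matched in `W₁` (her payoff there is positive) to a good of `T`, and a good of `T`
is sold in `W₂` (its price there is positive) to a buyer of `A`. Both matchings are injective, so
`|A| ≤ |T| ≤ |A|`, and each of them restricts to a bijection between `A` and `T`. For `i` matched
to `j` in `W`, a rise of `p^j` therefore forces a drop of `u_i`, while a fall is immediate from
optimality of `j` at the old prices; equal prices with a strict change of payoff would put `i` in
`A` for one ordering of the two equilibria and match her to a good whose price changed. -/

theorem Finset.image_eq_of_injOn_of_subset_image {α γ : Type*} [DecidableEq γ] {f g : α → γ}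
    {A : Finset α} {S : Finset γ} (hf : Set.InjOn f A) (hfS : A.image f ⊆ S)
    (hgS : S ⊆ A.image g) : A.image f = S ∧ A.image g = S := by
  have hcard : S.card ≤ (A.image f).card :=
    calc S.card ≤ (A.image g).card := card_le_card hgS
      _ ≤ A.card := card_image_le
      _ = (A.image f).card := (card_image_of_injOn hf).symm
  refine ⟨eq_of_subset_of_card_le hfS hcard, (eq_of_subset_of_card_le hgS ?_).symm⟩
  exact (card_image_le.trans (card_image_of_injOn hf).ge).trans (card_le_card hfS)

namespace IsEquilib

variable {I J : Type} [Fintype I] [Fintype J] {M : Market I J}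
  {p p₁ p₂ : J → ℝ} {w w₁ w₂ : I → ℝ} {μ μ₁ μ₂ : I → Option J}

theorem match_injective (h : IsEquilib M p w μ) {i i' : I} {j : J}
    (hi : μ i = some j) (hi' : μ i' = some j) : i = i' :=
  h.1 i i' j hi hi'

theorem price_nonneg (h : IsEquilib M p w μ) (j : J) : 0 ≤ p j := h.2.1 j

theorem payoff_nonneg (h : IsEquilib M p w μ) (i : I) : 0 ≤ w i := h.2.2.1 i

theorem payoff_eq_of_match (h : IsEquilib M p w μ) {i : I} {j : J} (hm : μ i = some j) :
    w i = M.u i j (p j) :=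
  h.2.2.2.1 i j hm

theorem utility_le_payoff (h : IsEquilib M p w μ) (i : I) (j : J) : M.u i j (p j) ≤ w i :=
  h.2.2.2.2.1 i j

theorem payoff_eq_zero_of_unmatched (h : IsEquilib M p w μ) {i : I} (hi : μ i = none) :
    w i = 0 :=
  h.2.2.2.2.2.1 i hi

theorem price_eq_zero_of_unsold (h : IsEquilib M p w μ) {j : J} (hj : ∀ i, μ i ≠ some j) :
    p j = 0 :=
  h.2.2.2.2.2.2 j hj

theorem exists_match_price_lt_of_payoff_lt (h₁ : IsEquilib M p₁ w₁ μ₁)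
    (h₂ : IsEquilib M p₂ w₂ μ₂) {i : I} (hi : w₂ i < w₁ i) :
    ∃ j, μ₁ i = some j ∧ p₁ j < p₂ j := by
  obtain ⟨j, hj⟩ : ∃ j, μ₁ i = some j := by
    refine Option.ne_none_iff_exists'.mp fun hnone => ?_
    have := h₁.payoff_eq_zero_of_unmatched hnone
    linarith [h₂.payoff_nonneg i]
  have hu : M.u i j (p₂ j) < M.u i j (p₁ j) :=
    (h₂.utility_le_payoff i j).trans_lt (h₁.payoff_eq_of_match hj ▸ hi)
  exact ⟨j, hj, (M.anti i j).lt_iff_gt.mp hu⟩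

theorem exists_match_payoff_lt_of_price_lt (h₁ : IsEquilib M p₁ w₁ μ₁)
    (h₂ : IsEquilib M p₂ w₂ μ₂) {j : J} (hj : p₁ j < p₂ j) :
    ∃ i, μ₂ i = some j ∧ w₂ i < w₁ i := by
  obtain ⟨i, hi⟩ : ∃ i, μ₂ i = some j := by
    by_contra! hunsold
    have := h₂.price_eq_zero_of_unsold hunsold
    linarith [h₁.price_nonneg j]
  refine ⟨i, hi, ?_⟩
  calc w₂ i = M.u i j (p₂ j) := h₂.payoff_eq_of_match hi
    _ < M.u i j (p₁ j) := M.anti i j hj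
    _ ≤ w₁ i := h₁.utility_le_payoff i j

theorem image_match_eq (h₁ : IsEquilib M p₁ w₁ μ₁) (h₂ : IsEquilib M p₂ w₂ μ₂) :
    let A := Finset.univ.filter fun i => w₂ i < w₁ i
    let T := (Finset.univ.filter fun j => p₁ j < p₂ j).image some
    A.image μ₁ = T ∧ A.image μ₂ = T := by
  intro A T
  refine Finset.image_eq_of_injOn_of_subset_image ?_ ?_ ?_
  · intro i hi i' _ hii'
    obtain ⟨j, hj, -⟩ := h₁.exists_match_price_lt_of_payoff_lt h₂ (Finset.mem_filter.mp hi).2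
    exact h₁.match_injective hj (hii' ▸ hj)
  · simp only [Finset.image_subset_iff, A, T, Finset.mem_filter, Finset.mem_univ, true_and,
      Finset.mem_image]
    intro i hi
    obtain ⟨j, hj, hp⟩ := h₁.exists_match_price_lt_of_payoff_lt h₂ hi
    exact ⟨j, hp, hj.symm⟩
  · simp only [Finset.subset_iff, A, T, Finset.mem_filter, Finset.mem_univ, true_and,
      Finset.mem_image, forall_exists_index, and_imp, forall_apply_eq_imp_iff₂]
    intro j hp
    obtain ⟨i, hi, hw⟩ := h₁.exists_match_payoff_lt_of_price_lt h₂ hp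
    exact ⟨i, hw, hi⟩

end IsEquilib

/-- Entanglement: if buyer `i` is matched to good `j` in equilibrium `W`, then
across any other equilibrium `W'` the price of `j` and the payoff of `i` are
oppositely ordered. -/
theorem entanglement {I J : Type} [Fintype I] [Fintype J] (M : Market I J)
    (p p' : J → ℝ) (w w' : I → ℝ) (μ μ' : I → Option J)
    (h : IsEquilib M p w μ) (h' : IsEquilib M p' w' μ')
    (i : I) (j : J) (hm : μ i = some j) :
    (p j < p' j → w' i < w i) ∧ (p' j < p j → w i < w' i) ∧
    (p j = p' j → w i = w' i) := by
  refine ⟨fun hlt => ?_, fun hlt => ?_, fun heq => ?_⟩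
  · have hj : some j ∈ (Finset.univ.filter fun j => p j < p' j).image some := by simp [hlt]
    rw [← (h.image_match_eq h').1] at hj
    obtain ⟨i', hi', hm'⟩ := Finset.mem_image.mp hj
    rw [h.match_injective hm' hm] at hi'
    exact (Finset.mem_filter.mp hi').2
  · calc w i = M.u i j (p j) := h.payoff_eq_of_match hm
      _ < M.u i j (p' j) := M.anti i j hlt
      _ ≤ w' i := h'.utility_le_payoff i j
  · have hle : w i ≤ w' i := by
      rw [h.payoff_eq_of_match hm, heq]
      exact h'.utility_le_payoff i j
    refine hle.eq_of_not_lt fun hlt => ?_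
    have hi : μ i ∈ (Finset.univ.filter fun i => w i < w' i).image μ :=
      Finset.mem_image_of_mem μ (by simp [hlt])
    rw [(h'.image_match_eq h).2, hm] at hi
    simp [heq] at hi
end
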